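/- Any two distinct points of the hexagonal lattice G_HEX = { x·(2,0,0) + y·(1,√3,0) + z·(1,√(1/3),√(8/3)) : x,y,z ∈ ℤ } are at Euclidean distance at least 2; hence unit balls centered at lattice points form a packing. -/

import Mathlib

/-- The 3-dimensional hexagonal lattice. -/
def hexLattice3 : Set (EuclideanSpace ℝ (Fin 3)) :=
  {p | ∃ x y z : ℤ, p = x • (WithLp.toLp 2 ![2, 0, 0] : EuclideanSpace ℝ (Fin 3)) +
      y • (WithLp.toLp 2 ![1, Real.sqrt 3, 0] : EuclideanSpace ℝ (Fin 3)) +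
      z • (WithLp.toLp 2 ![1, Real.sqrt (1/3), Real.sqrt (8/3)] : EuclideanSpace ℝ (Fin 3))}

lemma two_le_aux (n : ℤ) (h : 1 ≤ 2*n) : 1 ≤ n := by omega

lemma int_quad (x y z : ℤ) (h : ¬(x = 0 ∧ y = 0 ∧ z = 0)) :
    1 ≤ x^2 + y^2 + z^2 + x*y + y*z + z*x := by
  apply two_le_aux
  have h2 : x + y ≠ 0 ∨ y + z ≠ 0 ∨ z + x ≠ 0 := by omega
  rcases h2 with h'|h'|h' <;> rcases h'.lt_or_gt with h''|h'' <;>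
    nlinarith [sq_nonneg (x+y), sq_nonneg (y+z), sq_nonneg (z+x)]

lemma key_norm (x y z : ℤ) (h : ¬(x = 0 ∧ y = 0 ∧ z = 0))
    (w : EuclideanSpace ℝ (Fin 3))
    (hw0 : w 0 = 2*x + y + z)
    (hw1 : w 1 = Real.sqrt 3 * y + Real.sqrt (1/3) * z)
    (hw2 : w 2 = Real.sqrt (8/3) * z) : 2 ≤ ‖w‖ := by
  have h3 : Real.sqrt 3 ^ 2 = 3 := Real.sq_sqrt (by norm_num)
  have h13 : Real.sqrt (1/3) ^ 2 = 1/3 := Real.sq_sqrt (by norm_num)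
  have h83 : Real.sqrt (8/3) ^ 2 = 8/3 := Real.sq_sqrt (by norm_num)
  have hmul : Real.sqrt 3 * Real.sqrt (1/3) = 1 := by
    rw [← Real.sqrt_mul (by norm_num)]; norm_num
  have hQ : (1:ℝ) ≤ (x:ℝ)^2 + (y:ℝ)^2 + (z:ℝ)^2 + x*y + y*z + z*x := by
    exact_mod_cast int_quad x y z h
  rw [EuclideanSpace.norm_eq]
  rw [show (2:ℝ) = Real.sqrt 4 by
    rw [show (4:ℝ) = 2^2 by norm_num, Real.sqrt_sq (by norm_num)]]
  apply Real.sqrt_le_sqrt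
  rw [Fin.sum_univ_three, hw0, hw1, hw2]
  simp only [Real.norm_eq_abs, sq_abs]
  nlinarith [hQ, h3, h13, h83, hmul]

theorem hexLattice3_packing :
    ∀ p ∈ hexLattice3, ∀ q ∈ hexLattice3, p ≠ q →
      2 ≤ dist p q ∧ Disjoint (Metric.ball p 1) (Metric.ball q 1) := by
  intro p hp q hq hne
  obtain ⟨x1, y1, z1, hp1⟩ := hp
  obtain ⟨x2, y2, z2, hq1⟩ := hq
  have hcomp : ∀ i, p i = x1 * (![2, 0, 0] : Fin 3 → ℝ) i +
      y1 * (![1, Real.sqrt 3, 0] : Fin 3 → ℝ) i +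
      z1 * (![1, Real.sqrt (1/3), Real.sqrt (8/3)] : Fin 3 → ℝ) i := by
    intro i; rw [hp1]; fin_cases i <;> simp [zsmul_eq_mul]
  have hcompq : ∀ i, q i = x2 * (![2, 0, 0] : Fin 3 → ℝ) i +
      y2 * (![1, Real.sqrt 3, 0] : Fin 3 → ℝ) i +
      z2 * (![1, Real.sqrt (1/3), Real.sqrt (8/3)] : Fin 3 → ℝ) i := by
    intro i; rw [hq1]; fin_cases i <;> simp [zsmul_eq_mul]
  have hne' : ¬(x1 - x2 = 0 ∧ y1 - y2 = 0 ∧ z1 - z2 = 0) := by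
    rintro ⟨hx, hy, hz⟩
    apply hne
    obtain rfl : x1 = x2 := by omega
    obtain rfl : y1 = y2 := by omega
    obtain rfl : z1 = z2 := by omega
    rw [hp1, hq1]
  have key := key_norm (x1 - x2) (y1 - y2) (z1 - z2) hne' (p - q)
    (by have := hcomp 0; have := hcompq 0
        simp only [PiLp.sub_apply] at *
        push_cast
        simp_all [Matrix.cons_val_zero]; ring)
    (by have := hcomp 1; have := hcompq 1
        simp only [PiLp.sub_apply] at *
        push_cast
        simp_all; ring)
    (by have := hcomp 2; have := hcompq 2
        simp only [PiLp.sub_apply] at *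
        push_cast
        simp_all; ring)
  have hd : 2 ≤ dist p q := by rw [dist_eq_norm]; exact key
  exact ⟨hd, Metric.ball_disjoint_ball (by linarith)⟩
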